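/- Let ℓ be a nonzero real number and let h₁ < h₂ be real numbers such that there exists x ∈ (−1,1) with 2(h₁−x)(1−x²) − ℓ² > 0. Then F(h₁,ℓ) < F(h₂,ℓ), where F(h,ℓ) = ∫_{−1}^{1} √(max(2(h−x)(1−x²) − ℓ², 0))/(1−x²) dx. -/
import Mathlib


open MeasureTheory intervalIntegral

/-- The first action of the spherical pendulum (times `π`):
`F(h,ℓ) = ∫_{−1}^{1} √(max(2(h−x)(1−x²) − ℓ², 0))/(1−x²) dx`. -/
noncomputable def pendulumAction (h ℓ : ℝ) : ℝ :=
  ∫ x in (-1 : ℝ)..1, Real.sqrt (max (2 * (h - x) * (1 - x ^ 2) - ℓ ^ 2) 0) / (1 - x ^ 2)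

lemma pendulum_integrand_continuous (h ℓ : ℝ) (hℓ : ℓ ≠ 0) :
    Continuous fun x : ℝ =>
      Real.sqrt (max (2 * (h - x) * (1 - x ^ 2) - ℓ ^ 2) 0) / (1 - x ^ 2) := by
  rw [continuous_iff_continuousAt]
  intro y
  by_cases hy : 1 - y ^ 2 = 0
  · have hP : 2 * (h - y) * (1 - y ^ 2) - ℓ ^ 2 < 0 := by
      rw [hy]
      have : (0:ℝ) < ℓ ^ 2 := by positivity
      nlinarith
    have hcont : ContinuousAt (fun x : ℝ => 2 * (h - x) * (1 - x ^ 2) - ℓ ^ 2) y := by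
      fun_prop
    have hev : ∀ᶠ x in nhds y, 2 * (h - x) * (1 - x ^ 2) - ℓ ^ 2 < 0 :=
      hcont.eventually (eventually_lt_nhds hP)
    have heq : (fun x : ℝ => Real.sqrt (max (2 * (h - x) * (1 - x ^ 2) - ℓ ^ 2) 0)
        / (1 - x ^ 2)) =ᶠ[nhds y] fun _ => (0 : ℝ) := by
      filter_upwards [hev] with x hx
      simp [max_eq_right hx.le]
    exact continuousAt_const.congr heq.symm
  · exact ContinuousAt.div (by fun_prop) (by fun_prop) hy

/-- Let `ℓ ≠ 0` and `h₁ < h₂` be real numbers such that there exists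
`x ∈ (−1,1)` with `2(h₁−x)(1−x²) − ℓ² > 0`. Then `F(h₁,ℓ) < F(h₂,ℓ)`. -/
theorem action_strictMono_in_h (ℓ h₁ h₂ : ℝ) (hℓ : ℓ ≠ 0) (h12 : h₁ < h₂)
    (hx : ∃ x ∈ Set.Ioo (-1 : ℝ) 1, 0 < 2 * (h₁ - x) * (1 - x ^ 2) - ℓ ^ 2) :
    pendulumAction h₁ ℓ < pendulumAction h₂ ℓ := by
  obtain ⟨c, hc, hcP⟩ := hx
  unfold pendulumAction
  apply intervalIntegral.integral_lt_integral_of_continuousOn_of_le_of_exists_lt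
    (by norm_num : (-1 : ℝ) < 1)
    (pendulum_integrand_continuous h₁ ℓ hℓ).continuousOn
    (pendulum_integrand_continuous h₂ ℓ hℓ).continuousOn
  · intro x hxm
    rcases eq_or_lt_of_le hxm.2 with rfl | hx1
    · norm_num
    · have hden : 0 < 1 - x ^ 2 := by nlinarith [hxm.1]
      have hP : 2 * (h₁ - x) * (1 - x ^ 2) - ℓ ^ 2
          ≤ 2 * (h₂ - x) * (1 - x ^ 2) - ℓ ^ 2 := by nlinarith
      gcongr
  · refine ⟨c, ⟨hc.1.le, hc.2.le⟩, ?_⟩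
    have hden : 0 < 1 - c ^ 2 := by nlinarith [hc.1, hc.2]
    have hP2 : 2 * (h₁ - c) * (1 - c ^ 2) - ℓ ^ 2
        < 2 * (h₂ - c) * (1 - c ^ 2) - ℓ ^ 2 := by nlinarith
    have h1 : max (2 * (h₁ - c) * (1 - c ^ 2) - ℓ ^ 2) 0
        < max (2 * (h₂ - c) * (1 - c ^ 2) - ℓ ^ 2) 0 := by
      rw [max_eq_left hcP.le, max_eq_left (hcP.trans hP2).le]; exact hP2
    exact (div_lt_div_iff_of_pos_right hden).2
      (Real.sqrt_lt_sqrt (le_max_right _ _) h1)
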